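/- Let e : [a,b] → ℝ^m and ψ : [a,b] → ℝ be such that the function φ(t) := 1 - ‖e(t)‖²/ψ(t)² is Lipschitz continuous on [a,b], φ(t) > 0 for all t ∈ [a,b), and ∫_a^b 1/φ(t) dt < ∞. Then φ(b) > 0. -/
import Mathlib

/-- If φ(t) = 1 - ‖e(t)‖²/ψ(t)² is Lipschitz on [a,b], positive on [a,b), and 1/φ is
Lebesgue integrable on [a,b], then φ(b) > 0. -/
theorem stmt_5 {m : ℕ} (a b : ℝ) (hab : a < b)
    (e : ℝ → EuclideanSpace ℝ (Fin m)) (ψ : ℝ → ℝ) (φ : ℝ → ℝ) (L : NNReal)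
    (hφ : ∀ t ∈ Set.Icc a b, φ t = 1 - ‖e t‖ ^ 2 / ψ t ^ 2)
    (hLip : LipschitzOnWith L φ (Set.Icc a b))
    (hpos : ∀ t ∈ Set.Ico a b, 0 < φ t)
    (hint : MeasureTheory.IntegrableOn (fun t => 1 / φ t) (Set.Icc a b)) :
    0 < φ b := by
  by_contra hb
  push_neg at hb
  have hbmem : b ∈ Set.Icc a b := Set.right_mem_Icc.2 hab.le
  have hLpos : (0 : ℝ) < L := by
    rcases eq_or_lt_of_le L.coe_nonneg with h | h
    · exfalso
      have hd := hLip.dist_le_mul a (Set.left_mem_Icc.2 hab.le) b hbmem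
      have : φ a = φ b := by
        have h0 : dist (φ a) (φ b) = 0 := le_antisymm (by nlinarith [dist_nonneg (x := a) (y := b)]) dist_nonneg
        exact dist_eq_zero.1 h0
      have ha := hpos a (Set.left_mem_Ico.2 hab)
      linarith
    · exact h
  -- bound on Ioo a b
  have key : ∀ x ∈ Set.Ioo a b, ‖(x - b)⁻¹‖ ≤ (L : ℝ) * (1 / φ x) := by
    intro x hx
    have hxI : x ∈ Set.Icc a b := Set.Ioo_subset_Icc_self hx
    have hφx : 0 < φ x := hpos x ⟨hx.1.le, hx.2⟩
    have hd := hLip.dist_le_mul x hxI b hbmem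
    have hdist : dist (φ x) (φ b) = |φ x - φ b| := Real.dist_eq _ _
    have hdx : dist x b = b - x := by
      rw [Real.dist_eq, abs_of_nonpos (by linarith [hx.2])]; ring
    have hub : φ x ≤ (L : ℝ) * (b - x) := by
      have h1 : φ x - φ b ≤ (L : ℝ) * (b - x) := by
        calc φ x - φ b ≤ |φ x - φ b| := le_abs_self _
        _ ≤ (L : ℝ) * (b - x) := by rw [← hdist, ← hdx]; exact hd
      linarith
    have hbx : (0 : ℝ) < b - x := by linarith [hx.2]
    have : (b - x)⁻¹ ≤ (L : ℝ) * (1 / φ x) := by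
      rw [mul_one_div, inv_eq_one_div, div_le_div_iff₀ hbx hφx]
      nlinarith
    calc ‖(x - b)⁻¹‖ = (b - x)⁻¹ := by
          rw [Real.norm_eq_abs, abs_inv, abs_of_nonpos (by linarith), neg_sub]
      _ ≤ (L : ℝ) * (1 / φ x) := this
  have hintL : MeasureTheory.IntegrableOn (fun t => (L : ℝ) * (1 / φ t)) (Set.Ioo a b) := by
    exact ((hint.mono_set (Set.Ioo_subset_Icc_self)).const_mul _)
  have hmeas : MeasureTheory.AEStronglyMeasurable (fun x : ℝ => (x - b)⁻¹)
      (MeasureTheory.volume.restrict (Set.Ioo a b)) :=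
    ((measurable_id.sub_const b).inv).aestronglyMeasurable
  have hInt : MeasureTheory.IntegrableOn (fun x : ℝ => (x - b)⁻¹) (Set.Ioo a b) := by
    refine hintL.mono' hmeas ?_
    rw [MeasureTheory.ae_restrict_iff' measurableSet_Ioo]
    exact MeasureTheory.ae_of_all _ key
  have hII : IntervalIntegrable (fun x : ℝ => (x - b)⁻¹) MeasureTheory.volume a b :=
    (intervalIntegrable_iff_integrableOn_Ioo_of_le hab.le).2 hInt
  rw [intervalIntegrable_sub_inv_iff] at hII
  rcases hII with h | h
  · exact hab.ne h
  · exact h (Set.right_mem_uIcc)
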